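/- Let (Ω, μ) be a measure space with 0 < μ(Ω) < ∞, let y : Ω → ℝ^d be measurable, let E ⊆ ℝ^k be open, let h : ℝ^d → (0, ∞) and T : ℝ^d → ℝ^k be measurable with T(y(·)) μ-integrable and log h(y(·)) μ-integrable, and let A : E → ℝ be differentiable. Set p(y, η) = h(y)·exp(⟨η, T(y)⟩ − A(η)) and F(t) = −∫_Ω log p(y(x), η(t)) dμ(x) for a path η : ℝ → E differentiable at t₀. If η(t₀) satisfies the maximum-likelihood first-order condition ∇A(η(t₀)) = (1/μ(Ω))·∫_Ω T(y(x)) dμ(x), then F is differentiable at t₀ and F′(t₀) = ∫_Ω ⟨ η′(t₀), T(y(x)) − ∇A(η(t₀)) ⟩ dμ(x) = 0. That is, when the natural parameter is estimated by maximum likelihood, the additive term in the derivative of the negative log-likelihood region energy arising from the parameter's dependence on the region vanishes identically. -/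

import Mathlib

/-!
Integrating `log p(y, θ) = log h(y) + ⟪θ, T(y)⟫ - A(θ)` over `Ω` shows that the negative
log-likelihood is the function `θ ↦ -∫ log h - ⟪θ, ∫ T⟫ + μ(Ω) A(θ)`, whose gradient is
`μ(Ω) ∇A(θ) - ∫ T`. The maximum-likelihood condition says exactly that this gradient vanishes
at `η(t₀)`, so by the chain rule `F'(t₀) = 0`; for the same reason
`∫ ⟪η', T(y) - ∇A(η(t₀))⟫ = ⟪η', ∫ T - μ(Ω) ∇A(η(t₀))⟫ = 0`.
-/

open MeasureTheory
open scoped RealInnerProductSpace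

section ExpFamily

variable {Ω E : Type*} [MeasurableSpace Ω] {μ : Measure Ω} [IsFiniteMeasure μ]
  [NormedAddCommGroup E] [InnerProductSpace ℝ E] [CompleteSpace E]

theorem integral_inner_sub_const {S : Ω → E} (hS : Integrable S μ) (v c : E) :
    ∫ x, ⟪v, S x - c⟫ ∂μ = ⟪v, ∫ x, S x ∂μ - μ.real Set.univ • c⟫ := by
  simp only [inner_sub_right]
  rw [integral_sub (hS.const_inner v) (integrable_const _), integral_inner hS, integral_const,
    smul_eq_mul, real_inner_smul_right]

theorem integral_neg_log_mul_exp_inner_sub {g : Ω → ℝ} (hg : ∀ x, 0 < g x)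
    (hlog : Integrable (fun x => Real.log (g x)) μ) {S : Ω → E} (hS : Integrable S μ)
    (θ : E) (a : ℝ) :
    -∫ x, Real.log (g x * Real.exp (⟪θ, S x⟫ - a)) ∂μ
      = -∫ x, Real.log (g x) ∂μ - ⟪θ, ∫ x, S x ∂μ⟫ + μ.real Set.univ * a := by
  have hsplit : ∀ x, Real.log (g x * Real.exp (⟪θ, S x⟫ - a))
      = Real.log (g x) + (⟪θ, S x⟫ - a) := fun x => by
    rw [Real.log_mul (hg x).ne' (Real.exp_pos _).ne', Real.log_exp]
  have hlin : Integrable (fun x => ⟪θ, S x⟫ - a) μ := (hS.const_inner θ).sub (integrable_const _)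
  simp only [hsplit]
  rw [integral_add hlog hlin,
    integral_sub (hS.const_inner θ) (integrable_const _), integral_inner hS, integral_const,
    smul_eq_mul]
  ring

end ExpFamily

theorem HasGradientAt.hasDerivAt_sub_inner_add_mul_comp {E : Type*} [NormedAddCommGroup E]
    [InnerProductSpace ℝ E] [CompleteSpace E] {A : E → ℝ} {η : ℝ → E} {g η' : E} {t₀ : ℝ}
    (hA : HasGradientAt A g (η t₀)) (hη : HasDerivAt η η' t₀) (c M : ℝ) (m : E) :
    HasDerivAt (fun t => c - ⟪η t, m⟫ + M * A (η t)) ⟪η', M • g - m⟫ t₀ := by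
  have hAη : HasDerivAt (fun t => A (η t)) ⟪g, η'⟫ t₀ :=
    hA.hasFDerivAt.comp_hasDerivAt t₀ hη
  have hlin : HasDerivAt (fun t => ⟪η t, m⟫) ⟪η', m⟫ t₀ := by
    simpa using hη.inner ℝ (hasDerivAt_const t₀ m)
  refine (((hasDerivAt_const t₀ c).sub hlin).add (hAη.const_mul M)).congr_deriv ?_
  rw [inner_sub_right, real_inner_smul_right, real_inner_comm η' g]
  ring

theorem expfam_ML_negloglik_param_deriv_vanishes_general {d k : ℕ} {Ω : Type*}
    [MeasurableSpace Ω]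
    (μ : Measure Ω) (hμ0 : μ Set.univ ≠ 0) (hμfin : μ Set.univ ≠ ⊤)
    (y : Ω → EuclideanSpace ℝ (Fin d))
    (E : Set (EuclideanSpace ℝ (Fin k)))
    (h : EuclideanSpace ℝ (Fin d) → ℝ) (hhpos : ∀ v, 0 < h v)
    (T : EuclideanSpace ℝ (Fin d) → EuclideanSpace ℝ (Fin k))
    (hTint : Integrable (fun x => T (y x)) μ)
    (hloghint : Integrable (fun x => Real.log (h (y x))) μ)
    (A : EuclideanSpace ℝ (Fin k) → ℝ)
    (gradA : EuclideanSpace ℝ (Fin k) → EuclideanSpace ℝ (Fin k))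
    (hA : ∀ η ∈ E, HasGradientAt A (gradA η) η)
    (p : EuclideanSpace ℝ (Fin d) → EuclideanSpace ℝ (Fin k) → ℝ)
    (hp : ∀ v η, p v η = h v * Real.exp (⟪η, T v⟫ - A η))
    (η : ℝ → EuclideanSpace ℝ (Fin k)) (hηE : ∀ t, η t ∈ E)
    (t₀ : ℝ) (η' : EuclideanSpace ℝ (Fin k)) (hη : HasDerivAt η η' t₀)
    (hML : gradA (η t₀) = ((μ Set.univ).toReal)⁻¹ • ∫ x, T (y x) ∂μ)
    (F : ℝ → ℝ) (hF : ∀ t, F t = - ∫ x, Real.log (p (y x) (η t)) ∂μ) :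
    HasDerivAt F (∫ x, ⟪η', T (y x) - gradA (η t₀)⟫ ∂μ) t₀ ∧
    (∫ x, ⟪η', T (y x) - gradA (η t₀)⟫ ∂μ) = 0 := by
  have : IsFiniteMeasure μ := ⟨hμfin.lt_top⟩
  have hscore : ∫ x, T (y x) ∂μ - μ.real Set.univ • gradA (η t₀) = 0 := by
    rw [hML, Measure.real, smul_inv_smul₀ (ENNReal.toReal_pos hμ0 hμfin).ne', sub_self]
  have hvanish : ∫ x, ⟪η', T (y x) - gradA (η t₀)⟫ ∂μ = 0 := by
    rw [integral_inner_sub_const hTint, hscore, inner_zero_right]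
  have hFeq : F = fun t => -∫ x, Real.log (h (y x)) ∂μ - ⟪η t, ∫ x, T (y x) ∂μ⟫
      + μ.real Set.univ * A (η t) := funext fun t => by
    simp only [hF, hp]
    exact integral_neg_log_mul_exp_inner_sub (fun x => hhpos (y x)) hloghint hTint _ _
  have hderiv := (hA (η t₀) (hηE t₀)).hasDerivAt_sub_inner_add_mul_comp hη
    (-∫ x, Real.log (h (y x)) ∂μ) (μ.real Set.univ) (∫ x, T (y x) ∂μ)
  rw [← neg_sub, hscore, neg_zero, inner_zero_right] at hderiv
  exact ⟨hvanish ▸ hFeq ▸ hderiv, hvanish⟩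

/-- When the natural parameter of a canonical exponential family is estimated by
maximum likelihood, i.e. `∇A(η(t₀)) = (1/μ(Ω))·∫_Ω T(y(x)) dμ(x)`, the negative
log-likelihood region energy `F(t) = −∫_Ω log p(y(x), η(t)) dμ(x)` is differentiable
at `t₀` with `F′(t₀) = ∫_Ω ⟨η′(t₀), T(y(x)) − ∇A(η(t₀))⟩ dμ(x) = 0`: the additive
term arising from the parameter's dependence on the region vanishes. -/
theorem expfam_ML_negloglik_param_deriv_vanishes {d k : ℕ} {Ω : Type*}
    [MeasurableSpace Ω]
    (μ : Measure Ω) (hμ0 : μ Set.univ ≠ 0) (hμfin : μ Set.univ ≠ ⊤)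
    (y : Ω → EuclideanSpace ℝ (Fin d)) (hy : Measurable y)
    (E : Set (EuclideanSpace ℝ (Fin k))) (hEopen : IsOpen E)
    (h : EuclideanSpace ℝ (Fin d) → ℝ) (hh : Measurable h) (hhpos : ∀ v, 0 < h v)
    (T : EuclideanSpace ℝ (Fin d) → EuclideanSpace ℝ (Fin k)) (hT : Measurable T)
    (hTint : Integrable (fun x => T (y x)) μ)
    (hloghint : Integrable (fun x => Real.log (h (y x))) μ)
    (A : EuclideanSpace ℝ (Fin k) → ℝ)
    (gradA : EuclideanSpace ℝ (Fin k) → EuclideanSpace ℝ (Fin k))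
    (hA : ∀ η ∈ E, HasGradientAt A (gradA η) η)
    (p : EuclideanSpace ℝ (Fin d) → EuclideanSpace ℝ (Fin k) → ℝ)
    (hp : ∀ v η, p v η = h v * Real.exp (⟪η, T v⟫ - A η))
    (η : ℝ → EuclideanSpace ℝ (Fin k)) (hηE : ∀ t, η t ∈ E)
    (t₀ : ℝ) (η' : EuclideanSpace ℝ (Fin k)) (hη : HasDerivAt η η' t₀)
    (hML : gradA (η t₀) = ((μ Set.univ).toReal)⁻¹ • ∫ x, T (y x) ∂μ)
    (F : ℝ → ℝ) (hF : ∀ t, F t = - ∫ x, Real.log (p (y x) (η t)) ∂μ) :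
    HasDerivAt F (∫ x, ⟪η', T (y x) - gradA (η t₀)⟫ ∂μ) t₀ ∧
    (∫ x, ⟪η', T (y x) - gradA (η t₀)⟫ ∂μ) = 0 :=
  expfam_ML_negloglik_param_deriv_vanishes_general μ hμ0 hμfin y E h hhpos T hTint hloghint A gradA
    hA p hp η hηE t₀ η' hη hML F hF
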